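/- arXiv:1206.0613 — 2 statements merged into one kernel-verified Lean document; each statement's English description precedes it below -/
import Mathlib

section
/- Let A be a real p×r matrix with orthonormal columns (AᵀA = I_r), let N_1, …, N_{k₀} be real r×p matrices, set S_k = A N_k and M = Σ_{k=1}^{k₀} S_k S_kᵀ. If the r×r matrix G = Σ_{k=1}^{k₀} N_k N_kᵀ is positive definite, then: (i) M = A G Aᵀ; (ii) rank(M) = r; (iii) the column space of M equals the column space of A; and (iv) M b = 0 for every b ∈ ℝ^p with Aᵀ b = 0, i.e., the kernel of M is exactly the orthogonal complement of the column space of A. (Hence the factor loading space is spanned by the eigenvectors of M corresponding to its nonzero eigenvalues, and the number of nonzero eigenvalues of M is r.) -/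
open Matrix Finset

/-- if `A` has orthonormal columns, `S_k = A N_k`,
`M = ∑_k S_k S_kᵀ` and `G = ∑_k N_k N_kᵀ` is positive definite, then
(i) `M = A G Aᵀ`; (ii) `rank M = r`; (iii) the column space of `M` equals
the column space of `A`; (iv) the kernel of `M` is exactly the orthogonal
complement of the column space of `A`, i.e. `M b = 0 ↔ Aᵀ b = 0`. -/
theorem factor_loading_space_eigen_structure
    {p r k₀ : ℕ} (A : Matrix (Fin p) (Fin r) ℝ)
    (hA : Aᵀ * A = 1)
    (N : Fin k₀ → Matrix (Fin r) (Fin p) ℝ)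
    (S : Fin k₀ → Matrix (Fin p) (Fin p) ℝ) (hS : ∀ k, S k = A * N k)
    (M : Matrix (Fin p) (Fin p) ℝ) (hM : M = ∑ k, S k * (S k)ᵀ)
    (G : Matrix (Fin r) (Fin r) ℝ) (hG : G = ∑ k, N k * (N k)ᵀ)
    (hGpos : G.PosDef) :
    M = A * G * Aᵀ ∧
    M.rank = r ∧
    LinearMap.range M.mulVecLin = LinearMap.range A.mulVecLin ∧
    (∀ b : Fin p → ℝ, M.mulVec b = 0 ↔ Aᵀ.mulVec b = 0) := by
  have hGunit : IsUnit G := hGpos.isUnit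
  have hGinj : Function.Injective G.mulVec := mulVec_injective_iff_isUnit.mpr hGunit
  have hMeq : M = A * G * Aᵀ := by
    rw [hM, hG, Matrix.mul_sum, Matrix.sum_mul]
    refine Finset.sum_congr rfl fun k _ => ?_
    rw [hS k, transpose_mul]
    simp only [Matrix.mul_assoc]
  have hrange : LinearMap.range M.mulVecLin = LinearMap.range A.mulVecLin := by
    apply le_antisymm
    · rintro _ ⟨b, rfl⟩
      exact ⟨(G * Aᵀ).mulVec b, by
        simp only [mulVecLin_apply, hMeq, Matrix.mulVec_mulVec, Matrix.mul_assoc]⟩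
    · rintro _ ⟨b, rfl⟩
      refine ⟨(A * G⁻¹).mulVec b, ?_⟩
      have key : M * (A * G⁻¹) = A := by
        rw [hMeq]
        simp only [Matrix.mul_assoc]
        rw [← Matrix.mul_assoc Aᵀ A, hA, Matrix.one_mul,
          Matrix.mul_nonsing_inv _ (isUnit_iff_isUnit_det _ |>.1 hGunit), Matrix.mul_one]
      simp only [mulVecLin_apply, Matrix.mulVec_mulVec, key]
  have hrankA : A.rank = r := by
    have := Matrix.rank_transpose_mul_self A
    rw [hA, Matrix.rank_one] at this
    simpa using this.symm
  have hrank : M.rank = r := by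
    rw [Matrix.rank, hrange, ← Matrix.rank, hrankA]
  refine ⟨hMeq, hrank, hrange, fun b => ?_⟩
  constructor
  · intro h
    have h2 : G.mulVec (Aᵀ.mulVec b) = 0 := by
      have := congrArg (Aᵀ.mulVec) h
      rw [Matrix.mulVec_mulVec, hMeq] at this
      rw [← Matrix.mul_assoc, ← Matrix.mul_assoc, hA, Matrix.one_mul] at this
      rw [← Matrix.mulVec_mulVec] at this
      simpa using this
    have := hGinj (h2.trans (Matrix.mulVec_zero G).symm)
    exact this
  · intro h
    rw [hMeq, ← Matrix.mulVec_mulVec, h]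
    simp
end

section
/- Let S_1, …, S_{k₀} and Ŝ_1, …, Ŝ_{k₀} be real p×p matrices with M = Σ_{k=1}^{k₀} S_k S_kᵀ and M̂ = Σ_{k=1}^{k₀} Ŝ_k Ŝ_kᵀ. Let a, v ∈ ℝ^p be unit vectors such that S_kᵀ a = 0 for all 1 ≤ k ≤ k₀ (i.e., a is an eigenvector of M with eigenvalue 0). Then vᵀ M̂ v ≤ Σ_{k=1}^{k₀} ‖Ŝ_k − S_k‖² + 2‖v − a‖ · Σ_{k=1}^{k₀} ‖Ŝ_k − S_k‖·‖S_k‖ + ‖v − a‖² · ‖M‖. (This is the deterministic core of the decomposition λ̂_j = K₁ + K₂ + K₃ used to prove the faster rates for estimated zero-eigenvalues in Proposition 1(ii) and Theorem 1(ii).) -/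
open Matrix Finset

/-- Spectral norm of a real matrix: the operator norm of the induced linear map
between Euclidean spaces (the largest singular value). -/
noncomputable def specNorm {m n : ℕ} (G : Matrix (Fin m) (Fin n) ℝ) : ℝ :=
  ‖LinearMap.toContinuousLinearMap (Matrix.toEuclideanLin G)‖

/-- Euclidean norm of a vector in `ℝ^p`. -/
noncomputable def euclNorm {p : ℕ} (v : Fin p → ℝ) : ℝ :=
  ‖(EuclideanSpace.equiv (Fin p) ℝ).symm v‖

/-!
Write `Ŝ_kᵀ v = (Ŝ_k − S_k)ᵀ v + S_kᵀ (v − a)`, using `S_kᵀ a = 0`. Expanding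
`‖Ŝ_kᵀ v‖² ≤ (‖(Ŝ_k − S_k)ᵀ v‖ + ‖S_kᵀ (v − a)‖)²` and summing over `k` gives the first two
terms directly, while the squares `‖S_kᵀ (v − a)‖²` sum to `(v − a)ᵀ M (v − a) ≤ ‖v − a‖² ‖M‖`.
-/

section Norms

variable {m n : ℕ}

lemma euclNorm_eq_norm_toLp (x : Fin n → ℝ) : euclNorm x = ‖WithLp.toLp 2 x‖ := rfl

lemma euclNorm_nonneg (x : Fin n → ℝ) : 0 ≤ euclNorm x := norm_nonneg _

lemma euclNorm_add_le (x y : Fin n → ℝ) : euclNorm (x + y) ≤ euclNorm x + euclNorm y :=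
  norm_add_le (WithLp.toLp 2 x) (WithLp.toLp 2 y)

lemma dotProduct_eq_inner_toLp (x y : Fin n → ℝ) :
    x ⬝ᵥ y = inner ℝ (WithLp.toLp 2 x) (WithLp.toLp 2 y) := by
  simp [EuclideanSpace.inner_eq_star_dotProduct, dotProduct_comm]

lemma dotProduct_self_eq_euclNorm_sq (x : Fin n → ℝ) : x ⬝ᵥ x = euclNorm x ^ 2 := by
  rw [dotProduct_eq_inner_toLp, euclNorm_eq_norm_toLp, real_inner_self_eq_norm_sq]

lemma dotProduct_le_euclNorm_mul_euclNorm (x y : Fin n → ℝ) :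
    x ⬝ᵥ y ≤ euclNorm x * euclNorm y := by
  rw [dotProduct_eq_inner_toLp]
  exact real_inner_le_norm _ _

lemma euclNorm_mulVec_le (G : Matrix (Fin m) (Fin n) ℝ) (x : Fin n → ℝ) :
    euclNorm (G *ᵥ x) ≤ specNorm G * euclNorm x := by
  simpa [euclNorm_eq_norm_toLp, specNorm, Matrix.toLpLin_toLp] using
    (LinearMap.toContinuousLinearMap (Matrix.toEuclideanLin G)).le_opNorm (WithLp.toLp 2 x)

lemma specNorm_nonneg (G : Matrix (Fin m) (Fin n) ℝ) : 0 ≤ specNorm G := norm_nonneg _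

lemma specNorm_transpose (G : Matrix (Fin m) (Fin n) ℝ) : specNorm Gᵀ = specNorm G := by
  rw [specNorm, specNorm, ← conjTranspose_eq_transpose_of_trivial,
    Matrix.toEuclideanLin_conjTranspose_eq_adjoint, LinearMap.adjoint_toContinuousLinearMap]
  exact ContinuousLinearMap.adjoint.norm_map _

lemma dotProduct_mulVec_le_euclNorm_sq_mul_specNorm (G : Matrix (Fin n) (Fin n) ℝ)
    (x : Fin n → ℝ) : x ⬝ᵥ G *ᵥ x ≤ euclNorm x ^ 2 * specNorm G :=
  calc x ⬝ᵥ G *ᵥ x ≤ euclNorm x * euclNorm (G *ᵥ x) := dotProduct_le_euclNorm_mul_euclNorm _ _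
    _ ≤ euclNorm x * (specNorm G * euclNorm x) :=
        mul_le_mul_of_nonneg_left (euclNorm_mulVec_le G x) (euclNorm_nonneg x)
    _ = euclNorm x ^ 2 * specNorm G := by ring

end Norms

lemma dotProduct_sum_mul_transpose_mulVec {ι : Type*} [Fintype ι] {m n : ℕ}
    (T : ι → Matrix (Fin m) (Fin n) ℝ) (x : Fin m → ℝ) :
    x ⬝ᵥ (∑ k, T k * (T k)ᵀ) *ᵥ x = ∑ k, euclNorm ((T k)ᵀ *ᵥ x) ^ 2 := by
  rw [sum_mulVec, dotProduct_sum]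
  refine Finset.sum_congr rfl fun k _ => ?_
  rw [← mulVec_mulVec, dotProduct_mulVec, ← mulVec_transpose, dotProduct_self_eq_euclNorm_sq]

lemma euclNorm_transpose_mulVec_sq_le {m n : ℕ} (T S : Matrix (Fin m) (Fin n) ℝ)
    {a v : Fin m → ℝ} (hv : euclNorm v = 1) (haS : Sᵀ *ᵥ a = 0) :
    euclNorm (Tᵀ *ᵥ v) ^ 2
      ≤ specNorm (T - S) ^ 2 + 2 * euclNorm (v - a) * (specNorm (T - S) * specNorm S)
        + euclNorm (Sᵀ *ᵥ (v - a)) ^ 2 := by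
  have hsplit : Tᵀ *ᵥ v = (T - S)ᵀ *ᵥ v + Sᵀ *ᵥ (v - a) := by
    rw [transpose_sub, sub_mulVec, mulVec_sub, haS]
    abel
  have hdiff : euclNorm ((T - S)ᵀ *ᵥ v) ≤ specNorm (T - S) := by
    have h := euclNorm_mulVec_le (T - S)ᵀ v
    rwa [specNorm_transpose, hv, mul_one] at h
  have hS : euclNorm (Sᵀ *ᵥ (v - a)) ≤ specNorm S * euclNorm (v - a) := by
    have h := euclNorm_mulVec_le Sᵀ (v - a)
    rwa [specNorm_transpose] at h
  calc euclNorm (Tᵀ *ᵥ v) ^ 2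
      ≤ (specNorm (T - S) + euclNorm (Sᵀ *ᵥ (v - a))) ^ 2 := by
        rw [hsplit]
        gcongr
        · exact euclNorm_nonneg _
        · exact (euclNorm_add_le _ _).trans (by gcongr)
    _ = specNorm (T - S) ^ 2 + 2 * specNorm (T - S) * euclNorm (Sᵀ *ᵥ (v - a))
        + euclNorm (Sᵀ *ᵥ (v - a)) ^ 2 := by ring
    _ ≤ specNorm (T - S) ^ 2 + 2 * specNorm (T - S) * (specNorm S * euclNorm (v - a))
        + euclNorm (Sᵀ *ᵥ (v - a)) ^ 2 := by
        gcongr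
        exact mul_nonneg zero_le_two (specNorm_nonneg _)
    _ = _ := by ring

theorem zero_eigenvalue_estimate_bound_general
    {p k₀ : ℕ} (S Shat : Fin k₀ → Matrix (Fin p) (Fin p) ℝ)
    (M Mhat : Matrix (Fin p) (Fin p) ℝ)
    (hM : M = ∑ k, S k * (S k)ᵀ)
    (hMhat : Mhat = ∑ k, Shat k * (Shat k)ᵀ)
    (a v : Fin p → ℝ) (hv : euclNorm v = 1)
    (haS : ∀ k, (S k)ᵀ.mulVec a = 0) :
    v ⬝ᵥ Mhat.mulVec v
      ≤ ∑ k, specNorm (Shat k - S k) ^ 2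
        + 2 * euclNorm (v - a) * ∑ k, specNorm (Shat k - S k) * specNorm (S k)
        + euclNorm (v - a) ^ 2 * specNorm M := by
  have hM_quad : ∑ k, euclNorm ((S k)ᵀ *ᵥ (v - a)) ^ 2 ≤ euclNorm (v - a) ^ 2 * specNorm M := by
    rw [← dotProduct_sum_mul_transpose_mulVec, ← hM]
    exact dotProduct_mulVec_le_euclNorm_sq_mul_specNorm M (v - a)
  calc v ⬝ᵥ Mhat *ᵥ v = ∑ k, euclNorm ((Shat k)ᵀ *ᵥ v) ^ 2 := by
        rw [hMhat, dotProduct_sum_mul_transpose_mulVec]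
    _ ≤ ∑ k, (specNorm (Shat k - S k) ^ 2
          + 2 * euclNorm (v - a) * (specNorm (Shat k - S k) * specNorm (S k))
          + euclNorm ((S k)ᵀ *ᵥ (v - a)) ^ 2) :=
        sum_le_sum fun k _ => euclNorm_transpose_mulVec_sq_le _ _ hv (haS k)
    _ = ∑ k, specNorm (Shat k - S k) ^ 2
          + 2 * euclNorm (v - a) * ∑ k, specNorm (Shat k - S k) * specNorm (S k)
          + ∑ k, euclNorm ((S k)ᵀ *ᵥ (v - a)) ^ 2 := by
        rw [sum_add_distrib, sum_add_distrib, mul_sum]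
    _ ≤ _ := by linarith

/-- deterministic core of the `K₁ + K₂ + K₃` decomposition:
if `a, v` are unit vectors with `S_kᵀ a = 0` for all `k` (so `a` is a null
eigenvector of `M = ∑ S_k S_kᵀ`), then
`vᵀ M̂ v ≤ ∑ ‖Ŝ_k − S_k‖² + 2‖v−a‖ ∑ ‖Ŝ_k − S_k‖‖S_k‖ + ‖v−a‖²‖M‖`. -/
theorem zero_eigenvalue_estimate_bound
    {p k₀ : ℕ} (S Shat : Fin k₀ → Matrix (Fin p) (Fin p) ℝ)
    (M Mhat : Matrix (Fin p) (Fin p) ℝ)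
    (hM : M = ∑ k, S k * (S k)ᵀ)
    (hMhat : Mhat = ∑ k, Shat k * (Shat k)ᵀ)
    (a v : Fin p → ℝ) (ha : euclNorm a = 1) (hv : euclNorm v = 1)
    (haS : ∀ k, (S k)ᵀ.mulVec a = 0) :
    v ⬝ᵥ Mhat.mulVec v
      ≤ ∑ k, specNorm (Shat k - S k) ^ 2
        + 2 * euclNorm (v - a) * ∑ k, specNorm (Shat k - S k) * specNorm (S k)
        + euclNorm (v - a) ^ 2 * specNorm M :=
  zero_eigenvalue_estimate_bound_general S Shat M Mhat hM hMhat a v hv haS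
end
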